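/- Let Δt > 0, c_s ≥ 0 and α ∈ ℝ. Let (χ_pⁿ)ₙ in Q, (χ_wⁿ)ₙ in W, (χ_uⁿ)ₙ in V, (sⁿ)ₙ in Q, (rⁿ)ₙ in W and (ρⁿ)ₙ in Q be sequences with χ_p⁰ = 0 and χ_u⁰ = 0 satisfying for every n ≥ 0: (i) (1/Δt)(c_s(χ_pⁿ⁺¹ − χ_pⁿ) + α·D_V(χ_uⁿ⁺¹ − χ_uⁿ)) + D_W χ_wⁿ⁺¹ = (α/Δt)·sⁿ⁺¹ + Δt·ρⁿ⁺¹ in Q; (ii) k(χ_wⁿ⁺¹, z) − ⟨χ_pⁿ⁺¹, D_W z⟩ = k(rⁿ⁺¹, z) for all z ∈ W; (iii) a(χ_uⁿ⁺¹, v) − α⟨χ_pⁿ⁺¹, D_V v⟩ = 0 for all v ∈ V. Assume the inf-sup condition (there is β > 0 such that every q ∈ Q has a preimage z under D_W with ‖z‖ ≤ ‖q‖/β) and the boundedness k(z,z) ≤ M‖z‖² for all z ∈ W. Then there is a constant C > 0, depending only on β and M (in particular independent of Δt, c_s, α, μ, λ, κ and m), such that for every m ≥ 1: c_s‖χ_pᵐ‖²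 + Δt·Σ_{n=0}^{m−1} k(χ_wⁿ⁺¹, χ_wⁿ⁺¹) + κμ‖χ_uᵐ‖² + λ‖D_V χ_uᵐ‖² ≤ C·( (α²/Δt)·Σ_{n=0}^{m−1} ‖sⁿ⁺¹‖² + Δt·Σ_{n=0}^{m−1} k(rⁿ⁺¹, rⁿ⁺¹) + Δt³·Σ_{n=0}^{m−1} ‖ρⁿ⁺¹‖² ). (Abstract form of the telescoped discrete error bound which is the core of Theorem 5.2.) -/

import Mathlib

/-!
Testing the three equations with `χ_pⁿ⁺¹`, `χ_wⁿ⁺¹` and `χ_uⁿ⁺¹ - χ_uⁿ` and adding them, the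
coupling terms cancel. Since `B x x - B y y ≤ 2 B x (x - y)` for a symmetric positive semidefinite
form `B`, the left-hand side dominates the increment of the energy `c_s ‖χ_p‖² + a(χ_u, χ_u)` plus the
flux dissipation `Δt k(χ_w, χ_w)`. On the right, Young's inequality leaves a multiple of
`‖χ_pⁿ⁺¹‖²`, which the inf-sup condition bounds by `(M / β²) k(χ_w - r, χ_w - r)`, so it is absorbed
by the dissipation. Summing over `n` telescopes the energy, which vanishes at `n = 0`.
-/

open RealInnerProductSpace

namespace LinearMap.BilinForm

variable {M : Type*} [AddCommGroup M] [Module ℝ M] (B : LinearMap.BilinForm ℝ M)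

theorem two_mul_apply_le (hsymm : ∀ x y, B x y = B y x) (hpos : ∀ x, 0 ≤ B x x)
    (x y : M) {δ : ℝ} (hδ : 0 < δ) :
    2 * B x y ≤ δ * B x x + δ⁻¹ * B y y := by
  have h := hpos (δ • x - y)
  simp only [map_sub, map_smul, LinearMap.sub_apply, LinearMap.smul_apply, smul_eq_mul,
    hsymm y x] at h
  have hdiff : δ * B x x + δ⁻¹ * B y y - 2 * B x y
      = δ⁻¹ * (δ * (δ * B x x - B x y) - (δ * B x y - B y y)) := by
    field_simp
    ring
  rw [← sub_nonneg, hdiff]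
  exact mul_nonneg (inv_nonneg.mpr hδ.le) h

theorem apply_sub_self_le (hpos : ∀ x, 0 ≤ B x x) (x y : M) :
    B (x - y) (x - y) ≤ 2 * (B x x + B y y) := by
  have h := hpos (x + y)
  simp only [map_add, map_sub, LinearMap.add_apply, LinearMap.sub_apply] at h ⊢
  linarith

theorem apply_self_sub_apply_self_le (hsymm : ∀ x y, B x y = B y x) (hpos : ∀ x, 0 ≤ B x x)
    (x y : M) : B x x - B y y ≤ 2 * B x (x - y) := by
  have h := hpos (x - y)
  simp only [map_sub, LinearMap.sub_apply] at h ⊢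
  linarith [hsymm x y]

end LinearMap.BilinForm

section InnerProduct

variable {E : Type*} [NormedAddCommGroup E] [InnerProductSpace ℝ E]

theorem two_mul_inner_le (x y : E) {δ : ℝ} (hδ : 0 < δ) :
    2 * ⟪x, y⟫ ≤ δ * ‖x‖ ^ 2 + δ⁻¹ * ‖y‖ ^ 2 := by
  simpa only [innerₗ_apply_apply, real_inner_self_eq_norm_sq] using
    LinearMap.BilinForm.two_mul_apply_le (innerₗ E) (fun x y => real_inner_comm y x)
      (fun _ => real_inner_self_nonneg) x y hδ

theorem norm_sq_sub_norm_sq_le (x y : E) : ‖x‖ ^ 2 - ‖y‖ ^ 2 ≤ 2 * ⟪x - y, x⟫ := by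
  simpa only [innerₗ_apply_apply, real_inner_self_eq_norm_sq, real_inner_comm x] using
    LinearMap.BilinForm.apply_self_sub_apply_self_le (innerₗ E) (fun x y => real_inner_comm y x)
      (fun _ => real_inner_self_nonneg) x y

end InnerProduct

theorem norm_sq_le_of_infSup {Q W : Type*} [NormedAddCommGroup Q] [InnerProductSpace ℝ Q]
    [NormedAddCommGroup W] [Module ℝ W] (DW : W →ₗ[ℝ] Q) (k : LinearMap.BilinForm ℝ W)
    (hk_symm : ∀ x y, k x y = k y x) (hk_nonneg : ∀ x, 0 ≤ k x x)
    {β M : ℝ} (hβ : 0 < β) (hM : 0 < M)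
    (hinfsup : ∀ q : Q, ∃ z : W, DW z = q ∧ ‖z‖ ≤ ‖q‖ / β)
    (hk_bdd : ∀ z : W, k z z ≤ M * ‖z‖ ^ 2) {p : Q} {e : W}
    (he : ∀ z, k e z = ⟪p, DW z⟫) :
    ‖p‖ ^ 2 ≤ M / β ^ 2 * k e e := by
  obtain ⟨z, rfl, hz⟩ := hinfsup p
  have hz' : β ^ 2 * ‖z‖ ^ 2 ≤ ‖DW z‖ ^ 2 := by
    rw [← mul_pow]
    exact pow_le_pow_left₀ (by positivity) ((le_div_iff₀' hβ).mp hz) 2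
  have hyoung := k.two_mul_apply_le hk_symm hk_nonneg e z (δ := M / β ^ 2) (by positivity)
  have hkz : (M / β ^ 2)⁻¹ * k z z ≤ ‖DW z‖ ^ 2 := by
    calc (M / β ^ 2)⁻¹ * k z z ≤ (M / β ^ 2)⁻¹ * (M * ‖z‖ ^ 2) := by gcongr; exact hk_bdd z
      _ = β ^ 2 * ‖z‖ ^ 2 := by field_simp
      _ ≤ ‖DW z‖ ^ 2 := hz'
  rw [he, real_inner_self_eq_norm_sq] at hyoung
  linarith

section Elasticity

variable {Q V : Type*} [NormedAddCommGroup Q] [InnerProductSpace ℝ Q]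
  [NormedAddCommGroup V] [Module ℝ V]
  (d : LinearMap.BilinForm ℝ V) (DV : V →ₗ[ℝ] Q) (μ lam : ℝ)

noncomputable def elasticityForm : LinearMap.BilinForm ℝ V :=
  μ • d + lam • (innerₗ Q).compl₁₂ DV DV

@[simp]
theorem elasticityForm_apply (u v : V) :
    elasticityForm d DV μ lam u v = μ * d u v + lam * ⟪DV u, DV v⟫ := rfl

theorem elasticityForm_symm (hd_symm : ∀ u v, d u v = d v u) (u v : V) :
    elasticityForm d DV μ lam u v = elasticityForm d DV μ lam v u := by
  simp only [elasticityForm_apply, hd_symm u v, real_inner_comm (DV u)]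

theorem elasticityForm_coercive {κ : ℝ} (hd_coer : ∀ v, κ * ‖v‖ ^ 2 ≤ d v v) (hμ : 0 ≤ μ)
    (v : V) : κ * μ * ‖v‖ ^ 2 + lam * ‖DV v‖ ^ 2 ≤ elasticityForm d DV μ lam v v := by
  rw [elasticityForm_apply, real_inner_self_eq_norm_sq]
  nlinarith [mul_le_mul_of_nonneg_left (hd_coer v) hμ]

theorem elasticityForm_nonneg {κ : ℝ} (hκ : 0 ≤ κ) (hd_coer : ∀ v, κ * ‖v‖ ^ 2 ≤ d v v)
    (hμ : 0 ≤ μ) (hlam : 0 ≤ lam) (v : V) : 0 ≤ elasticityForm d DV μ lam v v :=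
  (by positivity : 0 ≤ κ * μ * ‖v‖ ^ 2 + lam * ‖DV v‖ ^ 2).trans
    (elasticityForm_coercive d DV μ lam hd_coer hμ v)

end Elasticity

section EnergyEstimate

variable {Q W V : Type*} [NormedAddCommGroup Q] [InnerProductSpace ℝ Q]
  [AddCommGroup W] [Module ℝ W] [AddCommGroup V] [Module ℝ V]
  (DW : W →ₗ[ℝ] Q) (DV : V →ₗ[ℝ] Q) (k : LinearMap.BilinForm ℝ W) (A : LinearMap.BilinForm ℝ V)
  {Δt cs α : ℝ} {p₀ p₁ s ρ : Q} {w r : W} {u₀ u₁ : V}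

theorem biot_energy_identity (hΔt : Δt ≠ 0)
    (h1 : Δt⁻¹ • (cs • (p₁ - p₀) + α • DV (u₁ - u₀)) + DW w = (α / Δt) • s + Δt • ρ)
    (h2 : ∀ z, k w z - ⟪p₁, DW z⟫ = k r z) (h3 : ∀ v, A u₁ v - α * ⟪p₁, DV v⟫ = 0) :
    cs * ⟪p₁ - p₀, p₁⟫ + A u₁ (u₁ - u₀) + Δt * k w w
      = Δt * k r w + α * ⟪s, p₁⟫ + Δt ^ 2 * ⟪ρ, p₁⟫ := by
  have h1' := congrArg (fun q => Δt * ⟪q, p₁⟫) h1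
  simp only [inner_add_left, real_inner_smul_left] at h1'
  field_simp at h1'
  linear_combination h1' + h3 (u₁ - u₀) + Δt * h2 w
    - α * real_inner_comm p₁ (DV (u₁ - u₀)) - Δt * real_inner_comm p₁ (DW w)

theorem biot_energy_step_le (hΔt : 0 < Δt) (hcs : 0 ≤ cs) {K : ℝ} (hK : 0 < K)
    (hk_symm : ∀ x y, k x y = k y x) (hk_nonneg : ∀ x, 0 ≤ k x x)
    (hA_symm : ∀ x y, A x y = A y x) (hA_nonneg : ∀ x, 0 ≤ A x x)
    (h1 : Δt⁻¹ • (cs • (p₁ - p₀) + α • DV (u₁ - u₀)) + DW w = (α / Δt) • s + Δt • ρ)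
    (h2 : ∀ z, k w z - ⟪p₁, DW z⟫ = k r z) (h3 : ∀ v, A u₁ v - α * ⟪p₁, DV v⟫ = 0)
    (hp : ‖p₁‖ ^ 2 ≤ K * k (w - r) (w - r)) :
    cs * ‖p₁‖ ^ 2 + A u₁ u₁ - (cs * ‖p₀‖ ^ 2 + A u₀ u₀) + Δt * k w w
      ≤ (5 / 2 + 8 * K) * (α ^ 2 / Δt * ‖s‖ ^ 2 + Δt * k r r + Δt ^ 3 * ‖ρ‖ ^ 2) := by
  have hid := biot_energy_identity DW DV k A hΔt.ne' h1 h2 h3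
  have hcs_le := mul_le_mul_of_nonneg_left (norm_sq_sub_norm_sq_le p₁ p₀) hcs
  have hA_le := A.apply_self_sub_apply_self_le hA_symm hA_nonneg u₁ u₀
  have hrw := mul_le_mul_of_nonneg_left
    (k.two_mul_apply_le hk_symm hk_nonneg r w (δ := 2) two_pos) hΔt.le
  -- Young's inequality with weight `8K/Δt`, so that `‖p₁‖²` appears with the weight `Δt/(8K)`
  -- and is absorbed by the flux term through `hp`
  have hs := two_mul_inner_le (α • s) p₁ (δ := 8 * K / Δt) (by positivity)
  have hρ := two_mul_inner_le (Δt ^ 2 • ρ) p₁ (δ := 8 * K / Δt) (by positivity)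
  have hp' : (8 * K / Δt)⁻¹ * ‖p₁‖ ^ 2 ≤ Δt / 4 * (k w w + k r r) := by
    calc (8 * K / Δt)⁻¹ * ‖p₁‖ ^ 2 ≤ (8 * K / Δt)⁻¹ * (K * (2 * (k w w + k r r))) := by
          gcongr
          exact hp.trans (mul_le_mul_of_nonneg_left (k.apply_sub_self_le hk_nonneg w r) hK.le)
      _ = Δt / 4 * (k w w + k r r) := by field_simp; ring
  rw [real_inner_smul_left, norm_smul, mul_pow, Real.norm_eq_abs, sq_abs] at hs hρ
  have hs' : 8 * K / Δt * (α ^ 2 * ‖s‖ ^ 2) = 8 * K * (α ^ 2 / Δt * ‖s‖ ^ 2) := by ring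
  have hρ' : 8 * K / Δt * ((Δt ^ 2) ^ 2 * ‖ρ‖ ^ 2) = 8 * K * (Δt ^ 3 * ‖ρ‖ ^ 2) := by
    field_simp
  have hr_nonneg : 0 ≤ K * (Δt * k r r) := mul_nonneg hK.le (mul_nonneg hΔt.le (hk_nonneg r))
  have hs_nonneg : 0 ≤ α ^ 2 / Δt * ‖s‖ ^ 2 := by positivity
  have hρ_nonneg : 0 ≤ Δt ^ 3 * ‖ρ‖ ^ 2 := by positivity
  linarith

theorem sub_add_sum_range_le_of_forall {E D G : ℕ → ℝ}
    (h : ∀ n, E (n + 1) - E n + D n ≤ G n) (m : ℕ) :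
    E m - E 0 + ∑ n ∈ Finset.range m, D n ≤ ∑ n ∈ Finset.range m, G n := by
  rw [← Finset.sum_range_sub, ← Finset.sum_add_distrib]
  exact Finset.sum_le_sum fun n _ => h n

/-- Abstract form of the telescoped discrete error bound which is the core of
Theorem 5.2.  The constant `C` depends only on the inf-sup constant `β` and the
continuity constant `M` of the form `k`. -/
theorem biot_discrete_error_bound (β M : ℝ) (hβ : 0 < β) (hM : 0 < M) :
    ∃ C > 0,
      ∀ (Q W V : Type)
        [NormedAddCommGroup Q] [InnerProductSpace ℝ Q] [FiniteDimensional ℝ Q]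
        [NormedAddCommGroup W] [InnerProductSpace ℝ W] [FiniteDimensional ℝ W]
        [NormedAddCommGroup V] [InnerProductSpace ℝ V] [FiniteDimensional ℝ V]
        (DW : W →ₗ[ℝ] Q) (DV : V →ₗ[ℝ] Q)
        (k : W →ₗ[ℝ] W →ₗ[ℝ] ℝ)
        (_hk_symm : ∀ z z' : W, k z z' = k z' z)
        (_hk_nonneg : ∀ z : W, 0 ≤ k z z)
        (d : V →ₗ[ℝ] V →ₗ[ℝ] ℝ)
        (_hd_symm : ∀ v v' : V, d v v' = d v' v)
        (κ : ℝ) (_hκ : 0 < κ)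
        (_hd_coer : ∀ v : V, κ * ‖v‖ ^ 2 ≤ d v v)
        (μ lam : ℝ) (_hμ : 0 < μ) (_hlam : 0 < lam)
        (a : V → V → ℝ)
        (_ha : ∀ u v : V, a u v = μ * d u v + lam * ⟪DV u, DV v⟫)
        (Δt cs α : ℝ) (_hΔt : 0 < Δt) (_hcs : 0 ≤ cs)
        (χp s ρ : ℕ → Q) (χw r : ℕ → W) (χu : ℕ → V)
        (_hχp0 : χp 0 = 0) (_hχu0 : χu 0 = 0)
        (_h1 : ∀ n : ℕ,
          (Δt)⁻¹ • (cs • (χp (n + 1) - χp n) + α • DV (χu (n + 1) - χu n))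
              + DW (χw (n + 1))
            = (α / Δt) • s (n + 1) + Δt • ρ (n + 1))
        (_h2 : ∀ n : ℕ, ∀ z : W, k (χw (n + 1)) z - ⟪χp (n + 1), DW z⟫ = k (r (n + 1)) z)
        (_h3 : ∀ n : ℕ, ∀ v : V, a (χu (n + 1)) v - α * ⟪χp (n + 1), DV v⟫ = 0)
        (_hinfsup : ∀ q : Q, ∃ z : W, DW z = q ∧ ‖z‖ ≤ ‖q‖ / β)
        (_hk_bdd : ∀ z : W, k z z ≤ M * ‖z‖ ^ 2)
        (m : ℕ), 1 ≤ m →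
        cs * ‖χp m‖ ^ 2
            + Δt * ∑ n ∈ Finset.range m, k (χw (n + 1)) (χw (n + 1))
            + κ * μ * ‖χu m‖ ^ 2 + lam * ‖DV (χu m)‖ ^ 2
          ≤ C * ((α ^ 2 / Δt) * ∑ n ∈ Finset.range m, ‖s (n + 1)‖ ^ 2
              + Δt * ∑ n ∈ Finset.range m, k (r (n + 1)) (r (n + 1))
              + Δt ^ 3 * ∑ n ∈ Finset.range m, ‖ρ (n + 1)‖ ^ 2) := by
  refine ⟨5 / 2 + 8 * (M / β ^ 2), by positivity, ?_⟩
  intro Q W V _ _ _ _ _ _ _ _ _ DW DV k hk_symm hk_nonneg d hd_symm κ hκ hd_coer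
    μ lam hμ hlam a ha Δt cs α hΔt hcs χp s ρ χw r χu hχp0 hχu0 h1 h2 h3 hinfsup hk_bdd m _
  obtain rfl : a = fun u v => elasticityForm d DV μ lam u v := funext₂ ha
  set A := elasticityForm d DV μ lam
  have hpressure (n : ℕ) :
      ‖χp (n + 1)‖ ^ 2 ≤ M / β ^ 2 * k (χw (n + 1) - r (n + 1)) (χw (n + 1) - r (n + 1)) :=
    norm_sq_le_of_infSup DW k hk_symm hk_nonneg hβ hM hinfsup hk_bdd fun z => by
      rw [map_sub, LinearMap.sub_apply, ← h2 n z]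
      ring
  have hstep := fun n => biot_energy_step_le DW DV k A hΔt hcs (by positivity) hk_symm hk_nonneg
    (elasticityForm_symm d DV μ lam hd_symm)
    (elasticityForm_nonneg d DV μ lam hκ.le hd_coer hμ.le hlam.le)
    (h1 n) (h2 n) (h3 n) (hpressure n)
  have htel := sub_add_sum_range_le_of_forall
    (E := fun n => cs * ‖χp n‖ ^ 2 + A (χu n) (χu n)) hstep m
  have hcoer := elasticityForm_coercive d DV μ lam hd_coer hμ.le (χu m)
  simp only [hχp0, hχu0, norm_zero, map_zero, ← Finset.mul_sum,
    Finset.sum_add_distrib] at htel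
  linarith
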